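/- Let c : ℕ → ℕ → ℕ be a symmetric function that is triangle-free, i.e., there are no pairwise distinct x, y, z ∈ ℕ with c(x,y) = c(y,z) = c(x,z) (regard c as an edge-coloring of the complete graph on ℕ by natural numbers with no monochromatic triangle). Then there exist functions α, β : ℕ → ℕ defining triangle-free colorings c_a on ℕ ∪ {a} and c_b on ℕ ∪ {b} extending c (with c_a(a,n) = α(n) and c_b(b,n) = β(n) for n ∈ ℕ) such that this pair of one-point extensions cannot be amalgamated over ℕ: there is no set Z with a symmetric triangle-free coloring d : Z → Z → ℕ and injective maps i : ℕ ∪ {a} → Z, j : ℕ ∪ {b} → Z that agree on ℕ and satisfy d(i(x), i(y)) = c_a(x,y) for all distinct x, y ∈ ℕ ∪ {a} and d(j(x), j(y)) = c_b(x,y) for all distinct x, y ∈ ℕ ∪ {b}. -/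

import Mathlib

/-- A coloring of (the edges of the complete graph on) `X` is triangle-free if no three
pairwise distinct points form a monochromatic triangle. -/
def TriangleFree {X : Type*} (c : X → X → ℕ) : Prop :=
  ∀ x y z : X, x ≠ y → y ≠ z → x ≠ z → ¬(c x y = c y z ∧ c x y = c x z)

/-- The one-point extension of a coloring `c` on `ℕ` by a new point (`none` in `Option ℕ`)
whose edge colors to the old points are given by `α`. -/
def extendColoring (c : ℕ → ℕ → ℕ) (α : ℕ → ℕ) : Option ℕ → Option ℕ → ℕ
  | some m, some n => c m n
  | some n, none => α n
  | none, some n => α n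
  | none, none => 0

/-- Auxiliary coloring of the new point: `u` at `0` and `1`, `u + 1` at `2`,
and an injective enumeration of `ℕ \ {u, u + 1}` on `n ≥ 3`. -/
def auxA (u n : ℕ) : ℕ :=
  if n ≤ 1 then u else if n = 2 then u + 1 else if n - 3 < u then n - 3 else n - 1

/-- The second coloring: equal to `auxA u` except at `0`, where it takes value `u + 1`. -/
def auxB (u n : ℕ) : ℕ := if n = 0 then u + 1 else auxA u n

lemma auxA_eq (u : ℕ) {n m : ℕ} (hnm : n ≠ m) (h : auxA u n = auxA u m) :
    (n = 0 ∧ m = 1) ∨ (n = 1 ∧ m = 0) := by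
  unfold auxA at h
  split_ifs at h <;> omega

lemma auxB_eq (u : ℕ) {n m : ℕ} (hnm : n ≠ m) (h : auxB u n = auxB u m) :
    (n = 0 ∧ m = 2) ∨ (n = 2 ∧ m = 0) := by
  unfold auxB auxA at h
  split_ifs at h <;> omega

lemma auxA_surj (u k : ℕ) : ∃ n, 1 ≤ n ∧ auxA u n = k := by
  by_cases h1 : k = u
  · exact ⟨1, by unfold auxA; split_ifs <;> omega⟩
  by_cases h2 : k = u + 1
  · exact ⟨2, by unfold auxA; split_ifs <;> omega⟩
  by_cases h3 : k < u
  · exact ⟨k + 3, by unfold auxA; split_ifs <;> omega⟩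
  · exact ⟨k + 1, by unfold auxA; split_ifs <;> omega⟩

lemma auxA_zero (u : ℕ) : auxA u 0 = u := by unfold auxA; split_ifs <;> omega

lemma auxA_one (u : ℕ) : auxA u 1 = u := by unfold auxA; split_ifs <;> omega

lemma auxB_zero (u : ℕ) : auxB u 0 = u + 1 := rfl

lemma auxB_two (u : ℕ) : auxB u 2 = u + 1 := by
  unfold auxB auxA; split_ifs <;> omega

lemma keyA (c : ℕ → ℕ → ℕ) (hsymm : ∀ x y, c x y = c y x) (u : ℕ) (hc : c 0 1 < u)
    {n m : ℕ} (hnm : n ≠ m) : ¬(auxA u n = auxA u m ∧ auxA u n = c n m) := by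
  rintro ⟨h1, h2⟩
  rcases auxA_eq u hnm h1 with ⟨rfl, rfl⟩ | ⟨rfl, rfl⟩
  · rw [auxA_zero] at h2; omega
  · rw [auxA_one] at h2; rw [hsymm] at h2; omega

lemma keyB (c : ℕ → ℕ → ℕ) (hsymm : ∀ x y, c x y = c y x) (u : ℕ) (hc : c 0 2 < u + 1)
    {n m : ℕ} (hnm : n ≠ m) : ¬(auxB u n = auxB u m ∧ auxB u n = c n m) := by
  rintro ⟨h1, h2⟩
  rcases auxB_eq u hnm h1 with ⟨rfl, rfl⟩ | ⟨rfl, rfl⟩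
  · rw [auxB_zero] at h2; omega
  · rw [auxB_two] at h2; rw [hsymm] at h2; omega

/-- Every symmetric triangle-free edge coloring `c` of the complete graph
on `ℕ` has two triangle-free one-point extensions that cannot be amalgamated over `ℕ`. -/
theorem statement18 (c : ℕ → ℕ → ℕ)
    (hsymm : ∀ x y, c x y = c y x) (htf : TriangleFree c) :
    ∃ α β : ℕ → ℕ,
      (∀ x y, extendColoring c α x y = extendColoring c α y x) ∧
      TriangleFree (extendColoring c α) ∧
      (∀ x y, extendColoring c β x y = extendColoring c β y x) ∧
      TriangleFree (extendColoring c β) ∧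
      ¬ ∃ (Z : Type) (d : Z → Z → ℕ) (i j : Option ℕ → Z),
          (∀ x y, d x y = d y x) ∧ TriangleFree d ∧
          Function.Injective i ∧ Function.Injective j ∧
          (∀ n : ℕ, i (some n) = j (some n)) ∧
          (∀ x y : Option ℕ, x ≠ y → d (i x) (i y) = extendColoring c α x y) ∧
          (∀ x y : Option ℕ, x ≠ y → d (j x) (j y) = extendColoring c β x y) := by
  set u := max (c 0 1) (c 0 2) + 1 with hu
  have hc01 : c 0 1 < u := by omega
  have hc02 : c 0 2 < u + 1 := by omega
  refine ⟨auxA u, auxB u, ?_, ?_, ?_, ?_, ?_⟩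
  · intro x y; cases x <;> cases y <;> simp [extendColoring, hsymm]
  · intro x y z hxy hyz hxz
    rcases x with _ | n <;> rcases y with _ | m <;> rcases z with _ | p
    · exact absurd rfl hxy
    · exact absurd rfl hxy
    · exact absurd rfl hxz
    · -- none, some m, some p
      have hmp : m ≠ p := fun h => hyz (by rw [h])
      rintro ⟨h1, h2⟩
      exact keyA c hsymm u hc01 hmp ⟨h2, h1⟩
    · exact absurd rfl hyz
    · -- some n, none, some p
      have hnp : n ≠ p := fun h => hxz (by rw [h])
      rintro ⟨h1, h2⟩
      exact keyA c hsymm u hc01 hnp ⟨h1, h2⟩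
    · -- some n, some m, none
      have hnm : n ≠ m := fun h => hxy (by rw [h])
      rintro ⟨h1, h2⟩
      exact keyA c hsymm u hc01 hnm ⟨h2.symm.trans h1, h2.symm⟩
    · have hnm : n ≠ m := fun h => hxy (by rw [h])
      have hmp : m ≠ p := fun h => hyz (by rw [h])
      have hnp : n ≠ p := fun h => hxz (by rw [h])
      exact htf n m p hnm hmp hnp
  · intro x y; cases x <;> cases y <;> simp [extendColoring, hsymm]
  · intro x y z hxy hyz hxz
    rcases x with _ | n <;> rcases y with _ | m <;> rcases z with _ | p
    · exact absurd rfl hxy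
    · exact absurd rfl hxy
    · exact absurd rfl hxz
    · have hmp : m ≠ p := fun h => hyz (by rw [h])
      rintro ⟨h1, h2⟩
      exact keyB c hsymm u hc02 hmp ⟨h2, h1⟩
    · exact absurd rfl hyz
    · have hnp : n ≠ p := fun h => hxz (by rw [h])
      rintro ⟨h1, h2⟩
      exact keyB c hsymm u hc02 hnp ⟨h1, h2⟩
    · have hnm : n ≠ m := fun h => hxy (by rw [h])
      rintro ⟨h1, h2⟩
      exact keyB c hsymm u hc02 hnm ⟨h2.symm.trans h1, h2.symm⟩
    · have hnm : n ≠ m := fun h => hxy (by rw [h])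
      have hmp : m ≠ p := fun h => hyz (by rw [h])
      have hnp : n ≠ p := fun h => hxz (by rw [h])
      exact htf n m p hnm hmp hnp
  · rintro ⟨Z, d, i, j, hsd, htfd, hi, hj, hij, hdi, hdj⟩
    by_cases hab : i none = j none
    · -- then the color from the common new point to 0 would be both u and u + 1
      have h1 : d (i none) (i (some 0)) = auxA u 0 := hdi none (some 0) (by simp)
      have h2 : d (j none) (j (some 0)) = auxB u 0 := hdj none (some 0) (by simp)
      rw [hab, hij 0] at h1
      rw [h2, auxB_zero] at h1
      rw [auxA_zero] at h1
      omega
    · -- monochromatic triangle on i none, j none, common image of n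
      obtain ⟨n, hn1, hn2⟩ := auxA_surj u (d (i none) (j none))
      have hβn : auxB u n = auxA u n := by unfold auxB; simp [show n ≠ 0 by omega]
      have e1 : d (i none) (i (some n)) = auxA u n := hdi none (some n) (by simp)
      have e2 : d (j none) (j (some n)) = auxA u n := by
        rw [hdj none (some n) (by simp)]; exact hβn
      refine htfd (i none) (j none) (i (some n)) hab ?_ ?_ ⟨?_, ?_⟩
      · rw [hij n]; intro h; exact absurd (hj h) (by simp)
      · intro h; exact absurd (hi h) (by simp)
      · rw [hij n, e2, hn2]
      · rw [e1, hn2]
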